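/- Let A satisfy (H1) with positive eigenvalues ω_1 < ω_2 < … , ω_k → +∞, and associated mutually orthogonal eigenspaces Z_k spanning H. Let 0 < β < √ω_1, set λ_k = √(ω_k − β²), and let α ≠ 0. Consider the partially coupled system u'' + Au + 2βu' = 0, v'' + Av + αu = 0. If u(0) = u⁰ ∈ Z_1 and u'(0) = u¹ ∈ Z_1, then u(t) = e^{−βt}[u⁰ cos(λ_1 t) + ((u¹ + βu⁰)/λ_1) sin(λ_1 t)] ∈ Z_1 for all t ≥ 0; writing v(t) = v_1(t) + v_2(t) with v_1(t) ∈ Z_1 and v_2(t) ∈ Z_1^⊥, the component v_2 satisfies v_2'' + Av_2 = 0, and hence E(v_2(t), v_2'(t)) := ½(|v_2'(t)|² + ⟨Av_2(t), v_2(t)⟩) is constant in t. In particular, if v(0) ∉ Z_1 or v'(0) ∉ Z_1, then E(v_2(t), v_2'(t)) = E(v_2(0), v_2'(0)) > 0 for all t ≥ 0, so the system is not stabilizable (its energy does not tend to 0). -/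

import Mathlib

/-!
The first equation decouples: `u` and the explicit damped oscillation with the same data in `Z 1`
both solve `w'' + A w + 2β w' = 0`, and every eigencoordinate `⟪w, y⟫` of their difference solves a
scalar linear ODE with zero data, so the difference is orthogonal to a dense set.
Projecting the `v`-equation onto `(Z 1)ᗮ` kills the coupling `α u ∈ Z 1`, so `v₂'' + A v₂ = 0`.

As `A` is unbounded, `⟪A v₂, v₂⟫` cannot be differentiated. Instead compare `v₂` with regular
waves `z` (finite sums of eigenmodes, along which `A z` is differentiable): the energy of `z` and
the cross term `⟪v₂', z'⟫ + ⟪v₂, A z⟫` are conserved, and the energy of `v₂ - z` is nonnegative,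
so `E(v₂(0)) ≤ E(v₂(t)) + E(v₂(0) - z(0))`. By density of the eigenvectors and coercivity the last
term can be made arbitrarily small; time translation gives the reverse inequality.
-/

open RealInnerProductSpace Filter

section DampedOscillation

variable {E : Type*} [NormedAddCommGroup E] [NormedSpace ℝ E]

noncomputable def dampedOsc (β l : ℝ) (a b : E) (t : ℝ) : E :=
  Real.exp (-β * t) • (Real.cos (l * t) • a + Real.sin (l * t) • b)

theorem dampedOsc_zero (β l : ℝ) (a b : E) : dampedOsc β l a b 0 = a := by
  simp [dampedOsc]

theorem dampedOsc_mem {S : Submodule ℝ E} (β l : ℝ) {a b : E} (ha : a ∈ S) (hb : b ∈ S)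
    (t : ℝ) : dampedOsc β l a b t ∈ S :=
  S.smul_mem _ (S.add_mem (S.smul_mem _ ha) (S.smul_mem _ hb))

theorem hasDerivAt_dampedOsc (β l : ℝ) (a b : E) (t : ℝ) :
    HasDerivAt (dampedOsc β l a b) (dampedOsc β l (-β • a + l • b) (-l • a - β • b) t) t := by
  have hmul (c : ℝ) : HasDerivAt (fun s : ℝ => c * s) c t := by
    simpa using (hasDerivAt_id t).const_mul c
  refine ((hmul (-β)).exp.smul
    (((hmul l).cos.smul_const a).add ((hmul l).sin.smul_const b))).congr_deriv ?_
  simp only [dampedOsc, Pi.add_apply]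
  module

theorem hasDerivAt_dampedOsc_deriv (β l : ℝ) (a b : E) (t : ℝ) :
    HasDerivAt (dampedOsc β l (-β • a + l • b) (-l • a - β • b))
      (-(β ^ 2 + l ^ 2) • dampedOsc β l a b t
        - (2 * β) • dampedOsc β l (-β • a + l • b) (-l • a - β • b) t) t := by
  convert hasDerivAt_dampedOsc β l (-β • a + l • b) (-l • a - β • b) t using 1
  simp only [dampedOsc]
  module

end DampedOscillation

theorem eq_zero_of_hasDerivAt_second_order {b c : ℝ} {f f' : ℝ → ℝ}
    (hf : ∀ t, HasDerivAt f (f' t) t) (hf' : ∀ t, HasDerivAt f' (-c * f t - b * f' t) t)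
    (h0 : f 0 = 0) (h0' : f' 0 = 0) : f = 0 := by
  let L : ℝ × ℝ →L[ℝ] ℝ × ℝ :=
    (ContinuousLinearMap.snd ℝ ℝ ℝ).prod
      (-c • ContinuousLinearMap.fst ℝ ℝ ℝ - b • ContinuousLinearMap.snd ℝ ℝ ℝ)
  have huniq := ODE_solution_unique_univ (v := fun _ => L) (s := fun _ => Set.univ)
    (fun _ => L.lipschitz.lipschitzOnWith) (f := fun t => (f t, f' t)) (g := 0) (t₀ := 0)
    (fun t => ⟨by simpa [L] using (hf t).prodMk (hf' t), trivial⟩)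
    (fun t => ⟨by simp, trivial⟩)
    (by simp [h0, h0'])
  funext t
  simpa using congrArg Prod.fst (congrFun huniq t)

section Hilbert

variable {H : Type*} [NormedAddCommGroup H] [InnerProductSpace ℝ H] {dom : Set H} {A : H → H}
  {ι : Type*} {s : Set ι} {Z : ι → Submodule ℝ H} {ω : ι → ℝ}

theorem mem_biSup_induction (p : ι → Submodule ℝ H) {motive : H → Prop}
    {x : H} (hx : x ∈ ⨆ i ∈ s, p i) (hp : ∀ i ∈ s, ∀ y ∈ p i, motive y) (h0 : motive 0)
    (hadd : ∀ y z, motive y → motive z → motive (y + z)) : motive x :=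
  Submodule.iSup_induction (motive := motive) _ hx
    (fun i _ hy => Submodule.iSup_induction (motive := motive) _ hy
      (fun hi y hy => hp i hi y hy) h0 hadd) h0 hadd

theorem eq_zero_of_inner_eq_zero_of_dense
    (hdense : Dense ((⨆ i ∈ s, Z i : Submodule ℝ H) : Set H)) {x : H}
    (hx : ∀ i ∈ s, ∀ y ∈ Z i, ⟪x, y⟫ = 0) : x = 0 := by
  refine hdense.eq_zero_of_inner_left ℝ fun y hy => ?_
  have hle : (⨆ i ∈ s, Z i) ≤ (ℝ ∙ x)ᗮ := iSup₂_le fun i hi y hy =>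
    Submodule.mem_orthogonal_singleton_iff_inner_right.2 (hx i hi y hy)
  exact Submodule.mem_orthogonal_singleton_iff_inner_right.1 (hle hy)

def LinearOn (dom : Set H) (A : H → H) : Prop :=
  ∀ u ∈ dom, ∀ v ∈ dom, ∀ a b : ℝ, a • u + b • v ∈ dom ∧ A (a • u + b • v) = a • A u + b • A v

namespace LinearOn

variable {u v : H}

theorem add_mem (hA : LinearOn dom A) (hu : u ∈ dom) (hv : v ∈ dom) : u + v ∈ dom := by
  simpa using (hA u hu v hv 1 1).1

theorem map_add (hA : LinearOn dom A) (hu : u ∈ dom) (hv : v ∈ dom) : A (u + v) = A u + A v := by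
  simpa using (hA u hu v hv 1 1).2

theorem sub_mem (hA : LinearOn dom A) (hu : u ∈ dom) (hv : v ∈ dom) : u - v ∈ dom := by
  simpa [← sub_eq_add_neg] using (hA u hu v hv 1 (-1)).1

theorem map_sub (hA : LinearOn dom A) (hu : u ∈ dom) (hv : v ∈ dom) : A (u - v) = A u - A v := by
  simpa [← sub_eq_add_neg] using (hA u hu v hv 1 (-1)).2

theorem smul_mem (hA : LinearOn dom A) (c : ℝ) (hu : u ∈ dom) : c • u ∈ dom := by
  simpa using (hA u hu u hu c 0).1

theorem map_smul (hA : LinearOn dom A) (c : ℝ) (hu : u ∈ dom) : A (c • u) = c • A u := by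
  simpa using (hA u hu u hu c 0).2

theorem map_zero (hA : LinearOn dom A) (h0 : (0 : H) ∈ dom) : A 0 = 0 := by
  simpa using hA.map_smul 0 h0

end LinearOn

structure IsDampedWave (dom : Set H) (A : H → H) (b : ℝ) (w w' : ℝ → H) : Prop where
  mem : ∀ t, w t ∈ dom
  hasDerivAt : ∀ t, HasDerivAt w (w' t) t
  hasDerivAt_deriv : ∀ t, HasDerivAt w' (-A (w t) - b • w' t) t

structure IsRegularWave (dom : Set H) (A : H → H) (z z' : ℝ → H) : Prop
    extends IsDampedWave dom A 0 z z' where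
  deriv_mem : ∀ t, z' t ∈ dom
  hasDerivAt_apply : ∀ t, HasDerivAt (fun s => A (z s)) (A (z' t)) t

def HasRegularWave (dom : Set H) (A : H → H) (x p : H) : Prop :=
  ∃ z z', IsRegularWave dom A z z' ∧ z 0 = x ∧ z' 0 = p

noncomputable def energy (A : H → H) (x p : H) : ℝ := (‖p‖ ^ 2 + ⟪A x, x⟫) / 2

theorem IsDampedWave.of_eigen {S : Submodule ℝ H} {b c : ℝ}
    (hS : ∀ y ∈ S, y ∈ dom ∧ A y = c • y) {z z' : ℝ → H} (hzS : ∀ t, z t ∈ S)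
    (hz : ∀ t, HasDerivAt z (z' t) t) (hz' : ∀ t, HasDerivAt z' (-c • z t - b • z' t) t) :
    IsDampedWave dom A b z z' where
  mem t := (hS _ (hzS t)).1
  hasDerivAt := hz
  hasDerivAt_deriv t := by rw [(hS _ (hzS t)).2, ← neg_smul]; exact hz' t

theorem isDampedWave_dampedOsc {S : Submodule ℝ H} {β l : ℝ}
    (hS : ∀ y ∈ S, y ∈ dom ∧ A y = (β ^ 2 + l ^ 2) • y) {a b : H} (ha : a ∈ S) (hb : b ∈ S) :
    IsDampedWave dom A (2 * β) (dampedOsc β l a b)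
      (dampedOsc β l (-β • a + l • b) (-l • a - β • b)) :=
  .of_eigen hS (dampedOsc_mem β l ha hb) (hasDerivAt_dampedOsc β l a b)
    (hasDerivAt_dampedOsc_deriv β l a b)

theorem IsDampedWave.isRegularWave_of_eigen {S : Submodule ℝ H} {c : ℝ}
    (hS : ∀ y ∈ S, y ∈ dom ∧ A y = c • y) {z z' : ℝ → H} (hw : IsDampedWave dom A 0 z z')
    (hzS : ∀ t, z t ∈ S) (hz'S : ∀ t, z' t ∈ S) : IsRegularWave dom A z z' where
  toIsDampedWave := hw
  deriv_mem t := (hS _ (hz'S t)).1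
  hasDerivAt_apply t := by
    have hAz : (fun s => A (z s)) = fun s => c • z s := funext fun s => (hS _ (hzS s)).2
    rw [hAz, (hS _ (hz'S t)).2]
    exact (hw.hasDerivAt t).const_smul c

theorem hasRegularWave_of_eigen {S : Submodule ℝ H} {c : ℝ} (hc : 0 < c)
    (hS : ∀ y ∈ S, y ∈ dom ∧ A y = c • y) {x p : H} (hx : x ∈ S) (hp : p ∈ S) :
    HasRegularWave dom A x p := by
  set l := Real.sqrt c
  have hl : l ≠ 0 := (Real.sqrt_pos.2 hc).ne'
  have hS' : ∀ y ∈ S, y ∈ dom ∧ A y = ((0 : ℝ) ^ 2 + l ^ 2) • y := by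
    simpa [l, Real.sq_sqrt hc.le] using hS
  have hp' : l⁻¹ • p ∈ S := S.smul_mem _ hp
  have hw := isDampedWave_dampedOsc hS' hx hp'
  rw [mul_zero] at hw
  refine ⟨_, _, hw.isRegularWave_of_eigen hS (dampedOsc_mem 0 l hx hp')
    (dampedOsc_mem 0 l (S.add_mem (S.smul_mem _ hx) (S.smul_mem _ hp'))
      (S.sub_mem (S.smul_mem _ hx) (S.smul_mem _ hp'))), dampedOsc_zero .., ?_⟩
  simp [dampedOsc_zero, smul_smul, hl]

theorem HasRegularWave.mem {x p : H} (h : HasRegularWave dom A x p) : x ∈ dom := by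
  obtain ⟨z, z', hz, rfl, -⟩ := h
  exact hz.mem 0

theorem HasRegularWave.zero (h0 : (0 : H) ∈ dom) (hA0 : A 0 = 0) :
    HasRegularWave dom A 0 0 := by
  refine ⟨0, 0, ⟨⟨fun _ => h0, fun t => hasDerivAt_const t 0, fun t => ?_⟩, fun _ => h0,
    fun t => ?_⟩, rfl, rfl⟩ <;> simp [hA0, hasDerivAt_const]

theorem IsDampedWave.add (hA : LinearOn dom A) {b : ℝ} {w w' z z' : ℝ → H}
    (hw : IsDampedWave dom A b w w') (hz : IsDampedWave dom A b z z') :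
    IsDampedWave dom A b (w + z) (w' + z') where
  mem t := hA.add_mem (hw.mem t) (hz.mem t)
  hasDerivAt t := (hw.hasDerivAt t).add (hz.hasDerivAt t)
  hasDerivAt_deriv t := by
    convert (hw.hasDerivAt_deriv t).add (hz.hasDerivAt_deriv t) using 1
    rw [Pi.add_apply, Pi.add_apply, hA.map_add (hw.mem t) (hz.mem t)]
    module

theorem IsDampedWave.sub (hA : LinearOn dom A) {b : ℝ} {w w' z z' : ℝ → H}
    (hw : IsDampedWave dom A b w w') (hz : IsDampedWave dom A b z z') :
    IsDampedWave dom A b (w - z) (w' - z') where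
  mem t := hA.sub_mem (hw.mem t) (hz.mem t)
  hasDerivAt t := (hw.hasDerivAt t).sub (hz.hasDerivAt t)
  hasDerivAt_deriv t := by
    convert (hw.hasDerivAt_deriv t).sub (hz.hasDerivAt_deriv t) using 1
    rw [Pi.sub_apply, Pi.sub_apply, hA.map_sub (hw.mem t) (hz.mem t)]
    module

theorem HasRegularWave.add (hA : LinearOn dom A) {x p y q : H} (hxp : HasRegularWave dom A x p)
    (hyq : HasRegularWave dom A y q) : HasRegularWave dom A (x + y) (p + q) := by
  obtain ⟨w, w', hw, rfl, rfl⟩ := hxp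
  obtain ⟨z, z', hz, rfl, rfl⟩ := hyq
  refine ⟨w + z, w' + z', ⟨hw.add hA hz.toIsDampedWave, fun t => hA.add_mem (hw.deriv_mem t)
    (hz.deriv_mem t), fun t => ?_⟩, rfl, rfl⟩
  simp only [Pi.add_apply, hA.map_add (hw.mem _) (hz.mem _),
    hA.map_add (hw.deriv_mem t) (hz.deriv_mem t)]
  exact (hw.hasDerivAt_apply t).add (hz.hasDerivAt_apply t)

theorem energy_nonneg {m : ℝ} (hm : 0 ≤ m) (hcoer : ∀ u ∈ dom, m * ‖u‖ ^ 2 ≤ ⟪A u, u⟫)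
    {x : H} (hx : x ∈ dom) (p : H) : 0 ≤ energy A x p := by
  have := hcoer x hx
  unfold energy
  nlinarith [mul_nonneg hm (sq_nonneg ‖x‖), sq_nonneg ‖p‖]

theorem energy_pos {m : ℝ} (hm : 0 < m) (hcoer : ∀ u ∈ dom, m * ‖u‖ ^ 2 ≤ ⟪A u, u⟫)
    {x p : H} (hx : x ∈ dom) (h : x ≠ 0 ∨ p ≠ 0) : 0 < energy A x p := by
  have hAx := hcoer x hx
  unfold energy
  rcases h with h | h
  · nlinarith [mul_pos hm (pow_pos (norm_pos_iff.2 h) 2), sq_nonneg ‖p‖]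
  · nlinarith [mul_nonneg hm.le (sq_nonneg ‖x‖), pow_pos (norm_pos_iff.2 h) 2]

theorem energy_sub (hA : LinearOn dom A) (hsymm : ∀ u ∈ dom, ∀ v ∈ dom, ⟪A u, v⟫ = ⟪u, A v⟫)
    {x y : H} (hx : x ∈ dom) (hy : y ∈ dom) (p q : H) :
    energy A (x - y) (p - q) = energy A x p + energy A y q - (⟪p, q⟫ + ⟪x, A y⟫) := by
  simp only [energy, hA.map_sub hx hy, norm_sub_sq_real, inner_sub_left, inner_sub_right,
    hsymm x hx y hy, real_inner_comm x (A y)]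
  ring

theorem IsRegularWave.energy_eq (hsymm : ∀ u ∈ dom, ∀ v ∈ dom, ⟪A u, v⟫ = ⟪u, A v⟫)
    {z z' : ℝ → H} (hz : IsRegularWave dom A z z') (t : ℝ) :
    energy A (z t) (z' t) = energy A (z 0) (z' 0) := by
  have hd (s : ℝ) : HasDerivAt (fun r => energy A (z r) (z' r)) 0 s := by
    refine (((hz.hasDerivAt_deriv s).norm_sq.add
      ((hz.hasDerivAt_apply s).inner ℝ (hz.hasDerivAt s))).div_const 2).congr_deriv ?_
    rw [zero_smul, sub_zero, inner_neg_right, real_inner_comm (z' s),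
      hsymm _ (hz.deriv_mem s) _ (hz.mem s)]
    ring
  exact is_const_of_deriv_eq_zero (fun s => (hd s).differentiableAt) (fun s => (hd s).deriv) t 0

theorem IsDampedWave.inner_add_inner_eq (hsymm : ∀ u ∈ dom, ∀ v ∈ dom, ⟪A u, v⟫ = ⟪u, A v⟫)
    {w w' z z' : ℝ → H} (hw : IsDampedWave dom A 0 w w') (hz : IsRegularWave dom A z z')
    (t : ℝ) : ⟪w' t, z' t⟫ + ⟪w t, A (z t)⟫ = ⟪w' 0, z' 0⟫ + ⟪w 0, A (z 0)⟫ := by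
  have hd (s : ℝ) : HasDerivAt (fun r => ⟪w' r, z' r⟫ + ⟪w r, A (z r)⟫) 0 s := by
    refine (((hw.hasDerivAt_deriv s).inner ℝ (hz.hasDerivAt_deriv s)).add
      ((hw.hasDerivAt s).inner ℝ (hz.hasDerivAt_apply s))).congr_deriv ?_
    simp only [zero_smul, sub_zero, inner_neg_left, inner_neg_right,
      hsymm _ (hw.mem s) _ (hz.deriv_mem s)]
    ring
  exact is_const_of_deriv_eq_zero (fun s => (hd s).differentiableAt) (fun s => (hd s).deriv) t 0

theorem IsDampedWave.energy_le_add (hA : LinearOn dom A)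
    (hsymm : ∀ u ∈ dom, ∀ v ∈ dom, ⟪A u, v⟫ = ⟪u, A v⟫) {m : ℝ} (hm : 0 ≤ m)
    (hcoer : ∀ u ∈ dom, m * ‖u‖ ^ 2 ≤ ⟪A u, u⟫) {w w' z z' : ℝ → H}
    (hw : IsDampedWave dom A 0 w w') (hz : IsRegularWave dom A z z') (t : ℝ) :
    energy A (w 0) (w' 0) ≤ energy A (w t) (w' t) + energy A (w 0 - z 0) (w' 0 - z' 0) := by
  have h0 := energy_sub hA hsymm (hw.mem 0) (hz.mem 0) (w' 0) (z' 0)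
  have ht := energy_sub hA hsymm (hw.mem t) (hz.mem t) (w' t) (z' t)
  have hnonneg := energy_nonneg hm hcoer (hA.sub_mem (hw.mem t) (hz.mem t)) (w' t - z' t)
  linarith [hz.energy_eq hsymm t, hw.inner_add_inner_eq hsymm hz t]

theorem inner_le_norm_sq_div {m : ℝ} (hm : 0 < m) (hcoer : ∀ u ∈ dom, m * ‖u‖ ^ 2 ≤ ⟪A u, u⟫)
    {x : H} (hx : x ∈ dom) : ⟪A x, x⟫ ≤ ‖A x‖ ^ 2 / m := by
  have h1 := hcoer x hx
  have h2 := real_inner_le_norm (A x) x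
  rw [le_div_iff₀ hm]
  nlinarith [sq_nonneg (‖A x‖ - m * ‖x‖), norm_nonneg x, norm_nonneg (A x)]

theorem le_eigenvalue_of_coercive {m c : ℝ} (hcoer : ∀ u ∈ dom, m * ‖u‖ ^ 2 ≤ ⟪A u, u⟫) {y : H}
    (hy : y ∈ dom) (hAy : A y = c • y) (hy0 : y ≠ 0) : m ≤ c := by
  have h := hcoer y hy
  rw [hAy, real_inner_smul_left, real_inner_self_eq_norm_sq] at h
  exact le_of_mul_le_mul_right h (by positivity)

theorem exists_hasRegularWave_of_mem_iSup (hA : LinearOn dom A)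
    (hZ : ∀ i ∈ s, ∀ y ∈ Z i, y ∈ dom ∧ A y = ω i • y) {m : ℝ} (hm : 0 < m)
    (hcoer : ∀ u ∈ dom, m * ‖u‖ ^ 2 ≤ ⟪A u, u⟫) (h0 : (0 : H) ∈ dom) {p y : H}
    (hp : p ∈ ⨆ i ∈ s, Z i) (hy : y ∈ ⨆ i ∈ s, Z i) :
    ∃ x, A x = y ∧ HasRegularWave dom A x p := by
  let Q : H → H → Prop := fun p y => ∃ x, A x = y ∧ HasRegularWave dom A x p
  have hQ0 : Q 0 0 := ⟨0, hA.map_zero h0, .zero h0 (hA.map_zero h0)⟩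
  have hQadd {p y p' y'} : Q p y → Q p' y' → Q (p + p') (y + y') := by
    rintro ⟨x, rfl, hx⟩ ⟨x', rfl, hx'⟩
    exact ⟨_, hA.map_add hx.mem hx'.mem, hx.add hA hx'⟩
  have hQeigen (i) (hi : i ∈ s) (y) (hy : y ∈ Z i) : Q y 0 ∧ Q 0 y := by
    obtain rfl | hy0 := eq_or_ne y 0
    · exact ⟨hQ0, hQ0⟩
    have hω : 0 < ω i :=
      hm.trans_le (le_eigenvalue_of_coercive hcoer (hZ i hi y hy).1 (hZ i hi y hy).2 hy0)
    have hy' : (ω i)⁻¹ • y ∈ Z i := (Z i).smul_mem _ hy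
    refine ⟨⟨0, hA.map_zero h0, hasRegularWave_of_eigen hω (hZ i hi) (Z i).zero_mem hy⟩,
      ⟨_, ?_, hasRegularWave_of_eigen hω (hZ i hi) hy' (Z i).zero_mem⟩⟩
    rw [(hZ i hi _ hy').2, smul_smul, mul_inv_cancel₀ hω.ne', one_smul]
  have hQp : Q p 0 := mem_biSup_induction Z (motive := fun p => Q p 0) hp
    (fun i hi y hy => (hQeigen i hi y hy).1) hQ0 fun _ _ h h' => by simpa using hQadd h h'
  have hQy : Q 0 y := mem_biSup_induction Z (motive := Q 0) hy
    (fun i hi y hy => (hQeigen i hi y hy).2) hQ0 fun _ _ h h' => by simpa using hQadd h h'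
  simpa using hQadd hQp hQy

theorem exists_isRegularWave_energy_sub_lt (hA : LinearOn dom A)
    (hdense : Dense ((⨆ i ∈ s, Z i : Submodule ℝ H) : Set H))
    (hZ : ∀ i ∈ s, ∀ y ∈ Z i, y ∈ dom ∧ A y = ω i • y) {m : ℝ} (hm : 0 < m)
    (hcoer : ∀ u ∈ dom, m * ‖u‖ ^ 2 ≤ ⟪A u, u⟫) {x : H} (hx : x ∈ dom) (p : H) {ε : ℝ}
    (hε : 0 < ε) : ∃ z z', IsRegularWave dom A z z' ∧ energy A (x - z 0) (p - z' 0) < ε := by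
  obtain ⟨p', hp', hpp'⟩ := hdense.exists_dist_lt p (Real.sqrt_pos.2 hε)
  obtain ⟨y, hy, hxy⟩ := hdense.exists_dist_lt (A x) (Real.sqrt_pos.2 (mul_pos hm hε))
  have h0 : (0 : H) ∈ dom := by simpa using hA.smul_mem 0 hx
  obtain ⟨x', rfl, z, z', hz, rfl, rfl⟩ :=
    exists_hasRegularWave_of_mem_iSup hA hZ hm hcoer h0 hp' hy
  refine ⟨z, z', hz, ?_⟩
  rw [dist_eq_norm, Real.lt_sqrt (norm_nonneg _)] at hpp' hxy
  have hAe := inner_le_norm_sq_div hm hcoer (hA.sub_mem hx (hz.mem 0))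
  have : ‖A x - A (z 0)‖ ^ 2 / m < ε := by rwa [div_lt_iff₀ hm, mul_comm]
  unfold energy
  rw [hA.map_sub hx (hz.mem 0)] at hAe ⊢
  linarith

theorem IsDampedWave.energy_zero_le (hA : LinearOn dom A)
    (hsymm : ∀ u ∈ dom, ∀ v ∈ dom, ⟪A u, v⟫ = ⟪u, A v⟫)
    (hdense : Dense ((⨆ i ∈ s, Z i : Submodule ℝ H) : Set H))
    (hZ : ∀ i ∈ s, ∀ y ∈ Z i, y ∈ dom ∧ A y = ω i • y) {m : ℝ} (hm : 0 < m)
    (hcoer : ∀ u ∈ dom, m * ‖u‖ ^ 2 ≤ ⟪A u, u⟫) {w w' : ℝ → H}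
    (hw : IsDampedWave dom A 0 w w') (t : ℝ) :
    energy A (w 0) (w' 0) ≤ energy A (w t) (w' t) := by
  refine le_of_forall_pos_lt_add fun ε hε => ?_
  obtain ⟨z, z', hz, hlt⟩ :=
    exists_isRegularWave_energy_sub_lt hA hdense hZ hm hcoer (hw.mem 0) (w' 0) hε
  exact (hw.energy_le_add hA hsymm hm.le hcoer hz t).trans_lt (by gcongr)

theorem IsDampedWave.comp_const_add {b : ℝ} {w w' : ℝ → H} (hw : IsDampedWave dom A b w w')
    (t₀ : ℝ) : IsDampedWave dom A b (fun t => w (t₀ + t)) (fun t => w' (t₀ + t)) where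
  mem t := hw.mem (t₀ + t)
  hasDerivAt t := by
    simpa using (hw.hasDerivAt (t₀ + t)).comp_const_add t₀ t
  hasDerivAt_deriv t := by
    simpa using (hw.hasDerivAt_deriv (t₀ + t)).comp_const_add t₀ t

theorem IsDampedWave.energy_eq (hA : LinearOn dom A)
    (hsymm : ∀ u ∈ dom, ∀ v ∈ dom, ⟪A u, v⟫ = ⟪u, A v⟫)
    (hdense : Dense ((⨆ i ∈ s, Z i : Submodule ℝ H) : Set H))
    (hZ : ∀ i ∈ s, ∀ y ∈ Z i, y ∈ dom ∧ A y = ω i • y) {m : ℝ} (hm : 0 < m)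
    (hcoer : ∀ u ∈ dom, m * ‖u‖ ^ 2 ≤ ⟪A u, u⟫) {w w' : ℝ → H}
    (hw : IsDampedWave dom A 0 w w') (t : ℝ) :
    energy A (w t) (w' t) = energy A (w 0) (w' 0) := by
  refine le_antisymm ?_ (hw.energy_zero_le hA hsymm hdense hZ hm hcoer t)
  simpa using (hw.comp_const_add t).energy_zero_le hA hsymm hdense hZ hm hcoer (-t)

theorem IsDampedWave.eq_zero (hsymm : ∀ u ∈ dom, ∀ v ∈ dom, ⟪A u, v⟫ = ⟪u, A v⟫)
    (hdense : Dense ((⨆ i ∈ s, Z i : Submodule ℝ H) : Set H))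
    (hZ : ∀ i ∈ s, ∀ y ∈ Z i, y ∈ dom ∧ A y = ω i • y) {b : ℝ} {w w' : ℝ → H}
    (hw : IsDampedWave dom A b w w') (h0 : w 0 = 0) (h0' : w' 0 = 0) (t : ℝ) : w t = 0 := by
  refine eq_zero_of_inner_eq_zero_of_dense hdense fun i hi y hy => ?_
  have hd (r : ℝ) : HasDerivAt (fun r => ⟪w r, y⟫) ⟪w' r, y⟫ r := by
    simpa using (hw.hasDerivAt r).inner ℝ (hasDerivAt_const r y)
  have hd' (r : ℝ) :
      HasDerivAt (fun r => ⟪w' r, y⟫) (-ω i * ⟪w r, y⟫ - b * ⟪w' r, y⟫) r := by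
    refine ((hw.hasDerivAt_deriv r).inner ℝ (hasDerivAt_const r y)).congr_deriv ?_
    rw [inner_zero_right, zero_add, inner_sub_left, inner_neg_left, real_inner_smul_left,
      hsymm _ (hw.mem r) _ (hZ i hi y hy).1, (hZ i hi y hy).2, real_inner_smul_right]
    ring
  exact congrFun (eq_zero_of_hasDerivAt_second_order hd hd' (by simp [h0]) (by simp [h0'])) t

theorem IsDampedWave.eq_dampedOsc (hA : LinearOn dom A)
    (hsymm : ∀ u ∈ dom, ∀ v ∈ dom, ⟪A u, v⟫ = ⟪u, A v⟫)
    (hdense : Dense ((⨆ i ∈ s, Z i : Submodule ℝ H) : Set H))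
    (hZ : ∀ i ∈ s, ∀ y ∈ Z i, y ∈ dom ∧ A y = ω i • y) {S : Submodule ℝ H} {β l : ℝ}
    (hS : ∀ y ∈ S, y ∈ dom ∧ A y = (β ^ 2 + l ^ 2) • y) (hl : l ≠ 0) {u u' : ℝ → H}
    (hu : IsDampedWave dom A (2 * β) u u') (hu0 : u 0 ∈ S) (hu1 : u' 0 ∈ S) (t : ℝ) :
    u t = dampedOsc β l (u 0) (l⁻¹ • (u' 0 + β • u 0)) t := by
  have hW := isDampedWave_dampedOsc hS hu0 (S.smul_mem l⁻¹ (S.add_mem hu1 (S.smul_mem β hu0)))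
  refine sub_eq_zero.1 ((hu.sub hA hW).eq_zero hsymm hdense hZ ?_ ?_ t) <;>
    simp [dampedOsc_zero, smul_smul, hl]

theorem HasDerivAt.of_orthogonal_split {K : Submodule ℝ H} [Kᗮ.HasOrthogonalProjection]
    {f f₁ f₂ : ℝ → H} {y : H} {t : ℝ} (hf : HasDerivAt f y t) (hsplit : ∀ s, f s = f₁ s + f₂ s)
    (h₁ : ∀ s, f₁ s ∈ K) (h₂ : ∀ s, f₂ s ∈ Kᗮ) : HasDerivAt f₂ (Kᗮ.starProjection y) t := by
  have hf₂ : f₂ = fun s => Kᗮ.starProjection (f s) := funext fun s => by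
    rw [hsplit, map_add, (Submodule.starProjection_apply_eq_zero_iff _).2
      (K.le_orthogonal_orthogonal (h₁ s)), Submodule.starProjection_eq_self_iff.2 (h₂ s),
      zero_add]
  rw [hf₂]
  exact (Kᗮ.starProjection).hasFDerivAt.comp_hasDerivAt t hf

theorem apply_mem_orthogonal_of_eigen
    (hsymm : ∀ u ∈ dom, ∀ v ∈ dom, ⟪A u, v⟫ = ⟪u, A v⟫) {S : Submodule ℝ H} {c : ℝ}
    (hS : ∀ y ∈ S, y ∈ dom ∧ A y = c • y) {x : H} (hx : x ∈ dom) (hxS : x ∈ Sᗮ) : A x ∈ Sᗮ := by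
  refine (Submodule.mem_orthogonal' _ _).2 fun y hy => ?_
  rw [hsymm _ hx _ (hS y hy).1, (hS y hy).2, real_inner_smul_right,
    Submodule.inner_left_of_mem_orthogonal hy hxS, mul_zero]

theorem hasDerivAt_orthogonal_of_coupled [CompleteSpace H]
    (hA : LinearOn dom A) (hsymm : ∀ u ∈ dom, ∀ v ∈ dom, ⟪A u, v⟫ = ⟪u, A v⟫)
    {S : Submodule ℝ H} {c α t : ℝ} (hS : ∀ y ∈ S, y ∈ dom ∧ A y = c • y)
    {u v v' v₁ v₂ v₁' v₂' : ℝ → H} (hv' : HasDerivAt v' (-A (v t) - α • u t) t) (hu : u t ∈ S)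
    (hv : v t = v₁ t + v₂ t) (hv₁ : v₁ t ∈ S) (hv₂ : v₂ t ∈ Sᗮ) (hv₂dom : v₂ t ∈ dom)
    (hsplit' : ∀ s, v' s = v₁' s + v₂' s) (hv₁' : ∀ s, v₁' s ∈ S) (hv₂' : ∀ s, v₂' s ∈ Sᗮ) :
    HasDerivAt v₂' (-A (v₂ t)) t := by
  convert hv'.of_orthogonal_split hsplit' hv₁' hv₂' using 1
  have hzero {x : H} (hx : x ∈ S) : Sᗮ.starProjection x = 0 :=
    (Submodule.starProjection_apply_eq_zero_iff _).2 (S.le_orthogonal_orthogonal hx)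
  rw [hv, hA.map_add (hS _ hv₁).1 hv₂dom, (hS _ hv₁).2, map_sub, map_neg, map_add, map_smul,
    map_smul, hzero hv₁, hzero hu, Submodule.starProjection_eq_self_iff.2
      (apply_mem_orthogonal_of_eigen hsymm hS hv₂dom hv₂)]
  simp

end Hilbert

theorem partially_coupled_not_stabilizable_general
    {H : Type*} [NormedAddCommGroup H] [InnerProductSpace ℝ H] [CompleteSpace H]
    (dom : Set H) (A : H → H) (ω : ℕ → ℝ) (Z : ℕ → Submodule ℝ H)
    (hω_pos : 0 < ω 1)
    (hZ : ∀ k, 1 ≤ k → ∀ x ∈ Z k, x ∈ dom ∧ A x = ω k • x)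
    (hdense : Dense ((⨆ k ∈ Set.Ici 1, Z k : Submodule ℝ H) : Set H))
    (hlin : ∀ u ∈ dom, ∀ v ∈ dom, ∀ a b : ℝ,
      a • u + b • v ∈ dom ∧ A (a • u + b • v) = a • A u + b • A v)
    (hsymm : ∀ u ∈ dom, ∀ v ∈ dom, ⟪A u, v⟫ = ⟪u, A v⟫)
    (hcoer : ∀ u ∈ dom, ω 1 * ‖u‖ ^ 2 ≤ ⟪A u, u⟫)
    (β : ℝ) (hβ0 : 0 < β) (hβ1 : β < Real.sqrt (ω 1))
    (lam : ℕ → ℝ) (hlam : ∀ k, lam k = Real.sqrt (ω k - β ^ 2))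
    (α : ℝ)
    -- the solution `(u, u', v, v')` of `u'' + Au + 2βu' = 0`, `v'' + Av + αu = 0`:
    (u u' v v' : ℝ → H)
    (hu_dom : ∀ t, u t ∈ dom)
    (hu : ∀ t, HasDerivAt u (u' t) t)
    (hu' : ∀ t, HasDerivAt u' (-A (u t) - (2 * β) • u' t) t)
    (hv' : ∀ t, HasDerivAt v' (-A (v t) - α • u t) t)
    (hu0 : u 0 ∈ Z 1) (hu1 : u' 0 ∈ Z 1)
    -- the orthogonal splitting `v = v₁ + v₂`, `v' = v₁' + v₂'` along `Z 1 ⊕ Z 1ᗮ`: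
    (v₁ v₂ v₁' v₂' : ℝ → H)
    (hsplit : ∀ t, v t = v₁ t + v₂ t ∧ v' t = v₁' t + v₂' t)
    (hv₁Z : ∀ t, v₁ t ∈ Z 1) (hv₂Z : ∀ t, v₂ t ∈ (Z 1)ᗮ)
    (hv₁'Z : ∀ t, v₁' t ∈ Z 1) (hv₂'Z : ∀ t, v₂' t ∈ (Z 1)ᗮ)
    (hdv₂ : ∀ t, HasDerivAt v₂ (v₂' t) t)
    (hv₂dom : ∀ t, v₂ t ∈ dom) :
    -- (1) explicit formula for `u`, which stays in `Z 1`: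
    (∀ t : ℝ, 0 ≤ t →
      u t = Real.exp (-β * t) •
          (Real.cos (lam 1 * t) • u 0 +
            (Real.sin (lam 1 * t) / lam 1) • (u' 0 + β • u 0)) ∧
        u t ∈ Z 1) ∧
    -- (2) `v₂'' + A v₂ = 0`:
    (∀ t : ℝ, HasDerivAt v₂' (-A (v₂ t)) t) ∧
    -- (3) conservation of the energy of `v₂`:
    (∀ t : ℝ, 0 ≤ t →
      (‖v₂' t‖ ^ 2 + ⟪A (v₂ t), v₂ t⟫) / 2 =
        (‖v₂' 0‖ ^ 2 + ⟪A (v₂ 0), v₂ 0⟫) / 2) ∧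
    -- (4) non-stabilizability:
    ((v 0 ∉ Z 1 ∨ v' 0 ∉ Z 1) → ∀ t : ℝ, 0 ≤ t →
      0 < (‖v₂' t‖ ^ 2 + ⟪A (v₂ t), v₂ t⟫) / 2) := by
  have hβω : β ^ 2 < ω 1 := by
    nlinarith [Real.sq_sqrt hω_pos.le, Real.sqrt_nonneg (ω 1)]
  have hl0 : lam 1 ≠ 0 := by rw [hlam]; exact (Real.sqrt_pos.2 (by linarith)).ne'
  have hZ1 : ∀ y ∈ Z 1, y ∈ dom ∧ A y = (β ^ 2 + lam 1 ^ 2) • y := by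
    rw [hlam, Real.sq_sqrt (by linarith), add_sub_cancel]
    exact hZ 1 le_rfl
  have hu_eq := IsDampedWave.eq_dampedOsc hlin hsymm hdense hZ hZ1 hl0 ⟨hu_dom, hu, hu'⟩ hu0 hu1
  have huZ (t : ℝ) : u t ∈ Z 1 := hu_eq t ▸ dampedOsc_mem β (lam 1) hu0
    ((Z 1).smul_mem _ ((Z 1).add_mem hu1 ((Z 1).smul_mem β hu0))) t
  have hv₂'' (t : ℝ) : HasDerivAt v₂' (-A (v₂ t)) t :=
    hasDerivAt_orthogonal_of_coupled hlin hsymm (hZ 1 le_rfl) (hv' t) (huZ t) (hsplit t).1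
      (hv₁Z t) (hv₂Z t) (hv₂dom t) (fun s => (hsplit s).2) hv₁'Z hv₂'Z
  have hE := IsDampedWave.energy_eq hlin hsymm hdense hZ hω_pos hcoer
    ⟨hv₂dom, hdv₂, fun t => by simpa using hv₂'' t⟩
  refine ⟨fun t _ => ⟨?_, huZ t⟩, hv₂'', fun t _ => hE t, fun hv0 t _ => ?_⟩
  · rw [hu_eq t, dampedOsc, smul_smul, div_eq_mul_inv]
  · change 0 < energy A (v₂ t) (v₂' t)
    rw [hE t]
    refine energy_pos hω_pos hcoer (hv₂dom 0) (hv0.imp (fun h h0 => h ?_) (fun h h0 => h ?_))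
    · simpa [(hsplit 0).1, h0] using hv₁Z 0
    · simpa [(hsplit 0).2, h0] using hv₁'Z 0

/-- **Remark (non-stabilizability of the partially coupled system).**
`A` satisfies (H1) with positive eigenvalues `ω 1 < ω 2 < …`, `ω k → +∞`, and
mutually orthogonal eigenspaces `Z k` whose span is dense in `H`.  With
`0 < β < √(ω 1)`, `λ_k = √(ω k − β²)` and `α ≠ 0`, consider the partially coupled
system `u'' + Au + 2βu' = 0`, `v'' + Av + αu = 0`.
If `u(0), u'(0) ∈ Z 1`, then:
(1) `u(t) = e^{−βt}[cos(λ₁t) u(0) + ((u'(0) + βu(0))/λ₁) sin(λ₁t)] ∈ Z 1` for `t ≥ 0`;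
(2) writing `v = v₁ + v₂` with `v₁(t) ∈ Z 1`, `v₂(t) ∈ Z 1ᗮ`, the component `v₂`
satisfies `v₂'' + Av₂ = 0`;
(3) hence `E(v₂, v₂') = ½(|v₂'|² + ⟨Av₂, v₂⟩)` is constant in time;
(4) if `v(0) ∉ Z 1` or `v'(0) ∉ Z 1`, then `E(v₂(t), v₂'(t)) = E(v₂(0), v₂'(0)) > 0`
for all `t ≥ 0`, so the energy does not tend to `0`: the system is not stabilizable. -/
theorem partially_coupled_not_stabilizable
    {H : Type*} [NormedAddCommGroup H] [InnerProductSpace ℝ H] [CompleteSpace H]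
    (dom : Set H) (A : H → H) (ω : ℕ → ℝ) (Z : ℕ → Submodule ℝ H)
    (hω_mono : StrictMono ω) (hω_tendsto : Tendsto ω atTop atTop)
    (hω_pos : 0 < ω 1)
    (hZ : ∀ k, 1 ≤ k → ∀ x ∈ Z k, x ∈ dom ∧ A x = ω k • x)
    (horth : ∀ k l, 1 ≤ k → 1 ≤ l → k ≠ l → ∀ x ∈ Z k, ∀ y ∈ Z l, ⟪x, y⟫ = 0)
    (hdense : Dense ((⨆ k ∈ Set.Ici 1, Z k : Submodule ℝ H) : Set H))
    (hlin : ∀ u ∈ dom, ∀ v ∈ dom, ∀ a b : ℝ,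
      a • u + b • v ∈ dom ∧ A (a • u + b • v) = a • A u + b • A v)
    (hsymm : ∀ u ∈ dom, ∀ v ∈ dom, ⟪A u, v⟫ = ⟪u, A v⟫)
    (hcoer : ∀ u ∈ dom, ω 1 * ‖u‖ ^ 2 ≤ ⟪A u, u⟫)
    (β : ℝ) (hβ0 : 0 < β) (hβ1 : β < Real.sqrt (ω 1))
    (lam : ℕ → ℝ) (hlam : ∀ k, lam k = Real.sqrt (ω k - β ^ 2))
    (α : ℝ) (hα : α ≠ 0)
    -- the solution `(u, u', v, v')` of `u'' + Au + 2βu' = 0`, `v'' + Av + αu = 0`: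
    (u u' v v' : ℝ → H)
    (hu_dom : ∀ t, u t ∈ dom) (hv_dom : ∀ t, v t ∈ dom)
    (hu : ∀ t, HasDerivAt u (u' t) t)
    (hu' : ∀ t, HasDerivAt u' (-A (u t) - (2 * β) • u' t) t)
    (hv : ∀ t, HasDerivAt v (v' t) t)
    (hv' : ∀ t, HasDerivAt v' (-A (v t) - α • u t) t)
    (hu0 : u 0 ∈ Z 1) (hu1 : u' 0 ∈ Z 1)
    -- the orthogonal splitting `v = v₁ + v₂`, `v' = v₁' + v₂'` along `Z 1 ⊕ Z 1ᗮ`: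
    (v₁ v₂ v₁' v₂' : ℝ → H)
    (hsplit : ∀ t, v t = v₁ t + v₂ t ∧ v' t = v₁' t + v₂' t)
    (hv₁Z : ∀ t, v₁ t ∈ Z 1) (hv₂Z : ∀ t, v₂ t ∈ (Z 1)ᗮ)
    (hv₁'Z : ∀ t, v₁' t ∈ Z 1) (hv₂'Z : ∀ t, v₂' t ∈ (Z 1)ᗮ)
    (hdv₁ : ∀ t, HasDerivAt v₁ (v₁' t) t) (hdv₂ : ∀ t, HasDerivAt v₂ (v₂' t) t)
    (hv₂dom : ∀ t, v₂ t ∈ dom) :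
    -- (1) explicit formula for `u`, which stays in `Z 1`:
    (∀ t : ℝ, 0 ≤ t →
      u t = Real.exp (-β * t) •
          (Real.cos (lam 1 * t) • u 0 +
            (Real.sin (lam 1 * t) / lam 1) • (u' 0 + β • u 0)) ∧
        u t ∈ Z 1) ∧
    -- (2) `v₂'' + A v₂ = 0`:
    (∀ t : ℝ, HasDerivAt v₂' (-A (v₂ t)) t) ∧
    -- (3) conservation of the energy of `v₂`:
    (∀ t : ℝ, 0 ≤ t →
      (‖v₂' t‖ ^ 2 + ⟪A (v₂ t), v₂ t⟫) / 2 =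
        (‖v₂' 0‖ ^ 2 + ⟪A (v₂ 0), v₂ 0⟫) / 2) ∧
    -- (4) non-stabilizability:
    ((v 0 ∉ Z 1 ∨ v' 0 ∉ Z 1) → ∀ t : ℝ, 0 ≤ t →
      0 < (‖v₂' t‖ ^ 2 + ⟪A (v₂ t), v₂ t⟫) / 2) :=
  partially_coupled_not_stabilizable_general dom A ω Z hω_pos hZ hdense hlin hsymm hcoer β hβ0 hβ1
    lam hlam α u u' v v' hu_dom hu hu' hv' hu0 hu1 v₁ v₂ v₁' v₂' hsplit hv₁Z hv₂Z hv₁'Z hv₂'Z hdv₂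
    hv₂dom
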